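/- arXiv:1507.01049 — 3 statements merged into one kernel-verified Lean document; each statement's English description precedes it below -/
import Mathlib

section
/- Let Γ be a finite connected graph, G ≤ Aut(Γ) vertex-transitive, and let M be a non-regular normal subgroup of G that is transitive on the vertices. If for some vertex α the induced action of G_α on Γ(α) is quasiprimitive (every non-trivial normal subgroup of the induced group is transitive), then M_α acts transitively on Γ(α) for every vertex α; in particular Γ is M-arc-transitive. -/
/-- Let `Γ` be a finite connected graph, `G ≤ Aut Γ` vertex-transitive, and `M` a
non-regular vertex-transitive normal subgroup of `G`.  If for some vertex `α` the induced action
of `G_α` on `Γ(α)` is quasiprimitive (every normal subgroup of `G_α` acting non-trivially on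
`Γ(α)` acts transitively on `Γ(α)`), then `M_α` is transitive on `Γ(α)` for every vertex `α`;
in particular `Γ` is `M`-arc-transitive. -/
theorem stmt_1 {V : Type*} [Fintype V] (Γ : SimpleGraph V) (hconn : Γ.Connected)
    (G : Type*) [Group G] [MulAction G V] [FaithfulSMul G V]
    (haut : ∀ (g : G) (a b : V), Γ.Adj a b → Γ.Adj (g • a) (g • b))
    (hGtrans : ∀ a b : V, ∃ g : G, g • a = b)
    (M : Subgroup G) (hMnorm : M.Normal)
    (hMtrans : ∀ a b : V, ∃ m ∈ M, m • a = b)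
    (hMnonreg : ∃ (α : V) (m : G), m ∈ M ∧ m ≠ 1 ∧ m • α = α)
    (α₀ : V)
    (hqp : ∀ N : Subgroup G, N ≤ MulAction.stabilizer G α₀ →
      (∀ g ∈ MulAction.stabilizer G α₀, ∀ x ∈ N, g * x * g⁻¹ ∈ N) →
      ¬ (∀ x ∈ N, ∀ β ∈ Γ.neighborSet α₀, x • β = β) →
      (∀ β γ : V, β ∈ Γ.neighborSet α₀ → γ ∈ Γ.neighborSet α₀ → ∃ x ∈ N, x • β = γ)) :
    (∀ α : V, ∀ β γ : V, β ∈ Γ.neighborSet α → γ ∈ Γ.neighborSet α →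
        ∃ m ∈ M, m • α = α ∧ m • β = γ) ∧
    (∀ α β α' β' : V, Γ.Adj α β → Γ.Adj α' β' → ∃ m ∈ M, m • α = α' ∧ m • β = β') := by
  classical
  set N : Subgroup G := M ⊓ MulAction.stabilizer G α₀ with hNdef
  have hNle : N ≤ MulAction.stabilizer G α₀ := inf_le_right
  have hNnorm : ∀ g ∈ MulAction.stabilizer G α₀, ∀ x ∈ N, g * x * g⁻¹ ∈ N := by
    intro g hg x hx
    refine ⟨hMnorm.conj_mem x hx.1 g, ?_⟩
    have hxs : x • α₀ = α₀ := hx.2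
    have hgs : g • α₀ = α₀ := hg
    show (g * x * g⁻¹) • α₀ = α₀
    have hg' : g⁻¹ • α₀ = α₀ := by
      conv_lhs => rw [← hgs]
      simp
    rw [mul_smul, mul_smul, hg', hxs, hgs]
  -- key claim: N does not fix all neighbors of α₀ pointwise
  have hNmoves : ¬ (∀ x ∈ N, ∀ β ∈ Γ.neighborSet α₀, x • β = β) := by
    intro hfixall
    -- then every m ∈ M fixing a vertex fixes all its neighbors
    have hfix : ∀ (m : G), m ∈ M → ∀ α : V, m • α = α → ∀ β : V, Γ.Adj α β → m • β = β := by
      intro m hm α hα β hβ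
      obtain ⟨g, hg⟩ := hGtrans α₀ α
      have hx : g⁻¹ * m * g ∈ N := by
        refine ⟨by simpa using hMnorm.conj_mem m hm g⁻¹, ?_⟩
        show (g⁻¹ * m * g) • α₀ = α₀
        have hg' : g⁻¹ • α = α₀ := by rw [← hg]; simp
        rw [mul_smul, mul_smul, hg, hα, hg']
      have hβ' : g⁻¹ • β ∈ Γ.neighborSet α₀ := by
        have := haut g⁻¹ α β hβ
        have hg' : g⁻¹ • α = α₀ := by rw [← hg]; simp
        rwa [hg'] at this
      have := hfixall _ hx _ hβ'
      have h2 : (g * (g⁻¹ * m * g) * g⁻¹) • β = β := by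
        rw [mul_smul, mul_smul, this]
        simp
      simpa [mul_assoc] using h2
    -- hence an m ∈ M fixing a vertex fixes everything (connectedness)
    obtain ⟨α, m, hm, hm1, hma⟩ := hMnonreg
    have hwalk : ∀ (u v : V), Γ.Walk u v → m • u = u → m • v = v := by
      intro u v w
      induction w with
      | nil => exact id
      | cons h p ih => intro hu; exact ih (hfix m hm _ hu _ h)
    apply hm1
    apply FaithfulSMul.eq_of_smul_eq_smul (α := V)
    intro v
    have := hwalk α v (hconn α v).some hma
    simpa using this
  have hNtrans := hqp N hNle hNnorm hNmoves
  -- part 1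
  have part1 : ∀ α : V, ∀ β γ : V, β ∈ Γ.neighborSet α → γ ∈ Γ.neighborSet α →
      ∃ m ∈ M, m • α = α ∧ m • β = γ := by
    intro α β γ hβ hγ
    obtain ⟨g, hg⟩ := hGtrans α₀ α
    have hg' : g⁻¹ • α = α₀ := by rw [← hg]; simp
    have hβ' : g⁻¹ • β ∈ Γ.neighborSet α₀ := by
      have := haut g⁻¹ α β hβ; rwa [hg'] at this
    have hγ' : g⁻¹ • γ ∈ Γ.neighborSet α₀ := by
      have := haut g⁻¹ α γ hγ; rwa [hg'] at this
    obtain ⟨x, hx, hxβ⟩ := hNtrans _ _ hβ' hγ'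
    refine ⟨g * x * g⁻¹, hMnorm.conj_mem x hx.1 g, ?_, ?_⟩
    · have hxs : x • α₀ = α₀ := hx.2
      rw [mul_smul, mul_smul, hg', hxs, hg]
    · rw [mul_smul, mul_smul, hxβ, smul_inv_smul]
  refine ⟨part1, ?_⟩
  intro α β α' β' hαβ hα'β'
  obtain ⟨m₁, hm₁, hm₁a⟩ := hMtrans α α'
  have hβ₁ : Γ.Adj α' (m₁ • β) := by
    have := haut m₁ α β hαβ; rwa [hm₁a] at this
  obtain ⟨m₂, hm₂, hm₂a, hm₂b⟩ := part1 α' (m₁ • β) β' hβ₁ hα'β'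
  refine ⟨m₂ * m₁, mul_mem hm₂ hm₁, ?_, ?_⟩
  · rw [mul_smul, hm₁a, hm₂a]
  · rw [mul_smul, hm₂b]
end

section
/- Let Γ₁ be a finite graph of valency at least 2 and let ℓ ≥ 2. Then the ℓ-th direct (tensor) power Γ = Γ₁^ℓ is not (G,2)-arc-transitive for any group G contained in the wreath product Aut(Γ₁) wr Sym(ℓ) acting in product action on the vertex set. Concretely: there exist two neighbors β, β′ of a diagonal vertex α = (α₁,...,α₁) such that no element of the stabilizer of α in (Aut Γ₁)_{α₁} wr Sym(ℓ) fixing a common neighbor β₀ maps β to β′, so the stabilizer is not 2-transitive on the neighborhood of α. -/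
/-- The direct (tensor) power of a graph: vertices are `ℓ`-tuples, and two distinct tuples are
adjacent iff they are adjacent in every coordinate. -/
def tensorPow {V : Type*} (Γ₁ : SimpleGraph V) (ℓ : ℕ) : SimpleGraph (Fin ℓ → V) where
  Adj f g := f ≠ g ∧ ∀ i, Γ₁.Adj (f i) (g i)
  symm := ⟨fun f g h => ⟨h.1.symm, fun i => (h.2 i).symm⟩⟩
  loopless := ⟨fun f h => h.1 rfl⟩

/-!
An element `(h, σ)` of the wreath product whose components all fix `β₁` maps a tuple `x` to
`y i = h (σ⁻¹ i) (x (σ⁻¹ i))`, so the coordinates where `y` differs from `β₁` are exactly the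
`σ`-image of those where `x` does. Hence the number of coordinates different from `β₁` is preserved
by the stabilizer of `β₁`; it is `1` for `β` but `2` for `β'`.
-/

theorem tensorPow_adj_of_forall_adj {V : Type*} {Γ₁ : SimpleGraph V} {ℓ : ℕ} (hℓ : 0 < ℓ)
    {f g : Fin ℓ → V} (h : ∀ i, Γ₁.Adj (f i) (g i)) : (tensorPow Γ₁ ℓ).Adj f g :=
  ⟨fun hfg => (h ⟨0, hℓ⟩).ne (congrFun hfg _), h⟩

theorem setOf_apply_ne_eq_image_of_product_action {ι V : Type*} {h : ι → Equiv.Perm V}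
    {σ : Equiv.Perm ι} {b : V} (hb : ∀ j, h j b = b) {x y : ι → V}
    (hxy : ∀ i, h (σ⁻¹ i) (x (σ⁻¹ i)) = y i) :
    {i | y i ≠ b} = σ '' {j | x j ≠ b} := by
  ext i
  rw [Equiv.image_eq_preimage_symm, ← Equiv.Perm.inv_def]
  simp only [Set.mem_ofPred_eq, Set.mem_preimage, ← hxy i]
  conv_lhs => rw [← hb (σ⁻¹ i)]
  exact (h (σ⁻¹ i)).injective.ne_iff

theorem stmt_2_general {V : Type*} (Γ₁ : SimpleGraph V) (ℓ : ℕ) (hℓ : 2 ≤ ℓ)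
    (α₁ β₁ β₂ : V) (h1 : Γ₁.Adj α₁ β₁) (h2 : Γ₁.Adj α₁ β₂) (hne : β₁ ≠ β₂) :
    ∃ β β' : Fin ℓ → V,
      β = (fun j => if ((j : Fin ℓ) : ℕ) = ℓ - 1 then β₂ else β₁) ∧
      β' = (fun j => if ℓ - 2 ≤ ((j : Fin ℓ) : ℕ) then β₂ else β₁) ∧
      (tensorPow Γ₁ ℓ).Adj (fun _ => α₁) β ∧
      (tensorPow Γ₁ ℓ).Adj (fun _ => α₁) β' ∧
      β ≠ β' ∧
      ¬ ∃ (h : Fin ℓ → Equiv.Perm V) (σ : Equiv.Perm (Fin ℓ)),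
          (∀ i, (∀ a b : V, Γ₁.Adj a b → Γ₁.Adj (h i a) (h i b)) ∧
            h i α₁ = α₁ ∧ h i β₁ = β₁) ∧
          (∀ i, h (σ⁻¹ i) (β (σ⁻¹ i)) = β' i) := by
  let β : Fin ℓ → V := fun j => if (j : ℕ) = ℓ - 1 then β₂ else β₁
  let β' : Fin ℓ → V := fun j => if ℓ - 2 ≤ (j : ℕ) then β₂ else β₁
  let last : Fin ℓ := ⟨ℓ - 1, by omega⟩
  let penultimate : Fin ℓ := ⟨ℓ - 2, by omega⟩
  have hpenultimate_ne_last : penultimate ≠ last := by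
    simp only [penultimate, last, ne_eq, Fin.mk.injEq]
    omega
  have hβ_ne : ∀ j, β j ≠ β₁ → j = last := fun j hj => by
    simp only [β, ne_eq, ite_eq_right_iff, Classical.not_imp] at hj
    exact Fin.ext hj.1
  have hβ'_ne : ∀ j : Fin ℓ, ℓ - 2 ≤ (j : ℕ) → β' j ≠ β₁ := fun j hj => by
    simpa only [β', if_pos hj] using hne.symm
  refine ⟨β, β', rfl, rfl, ?_, ?_, ?_, ?_⟩
  · exact tensorPow_adj_of_forall_adj (by omega) fun i => by
      dsimp only [β]; split_ifs <;> assumption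
  · exact tensorPow_adj_of_forall_adj (by omega) fun i => by
      dsimp only [β']; split_ifs <;> assumption
  · intro hββ'
    exact hpenultimate_ne_last (hβ_ne _ (hββ' ▸ hβ'_ne penultimate le_rfl))
  · rintro ⟨h, σ, hh, hmap⟩
    have hsupp := setOf_apply_ne_eq_image_of_product_action (fun i => (hh i).2.2) hmap
    have hβ_supp : {j | β j ≠ β₁}.Subsingleton := fun j hj k hk =>
      (hβ_ne j hj).trans (hβ_ne k hk).symm
    have hβ'_supp := hsupp ▸ hβ_supp.image σ
    exact hpenultimate_ne_last <|
      hβ'_supp (hβ'_ne penultimate le_rfl) (hβ'_ne last (by simp only [last]; omega))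

/-- the `ℓ`-th direct power of a graph of valency at least `2` is not
`(G,2)`-arc-transitive for `G` inside the wreath product `Aut(Γ₁) wr Sym(ℓ)` in product action:
for the diagonal vertex `α = (α₁,…,α₁)` there are neighbors `β, β'` of `α` such that no element
of the product-action wreath product whose components are automorphisms of `Γ₁` fixing `α₁` and
fixing the common neighbor data `β₁` maps `β` to `β'`; hence the stabilizer of `α` is not
`2`-transitive on the neighborhood of `α`. -/
theorem stmt_2 {V : Type*} [Fintype V] (Γ₁ : SimpleGraph V) (ℓ : ℕ) (hℓ : 2 ≤ ℓ)
    (α₁ β₁ β₂ : V) (h1 : Γ₁.Adj α₁ β₁) (h2 : Γ₁.Adj α₁ β₂) (hne : β₁ ≠ β₂) :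
    ∃ β β' : Fin ℓ → V,
      β = (fun j => if ((j : Fin ℓ) : ℕ) = ℓ - 1 then β₂ else β₁) ∧
      β' = (fun j => if ℓ - 2 ≤ ((j : Fin ℓ) : ℕ) then β₂ else β₁) ∧
      (tensorPow Γ₁ ℓ).Adj (fun _ => α₁) β ∧
      (tensorPow Γ₁ ℓ).Adj (fun _ => α₁) β' ∧
      β ≠ β' ∧
      ¬ ∃ (h : Fin ℓ → Equiv.Perm V) (σ : Equiv.Perm (Fin ℓ)),
          (∀ i, (∀ a b : V, Γ₁.Adj a b → Γ₁.Adj (h i a) (h i b)) ∧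
            h i α₁ = α₁ ∧ h i β₁ = β₁) ∧
          (∀ i, h (σ⁻¹ i) (β (σ⁻¹ i)) = β' i) :=
  stmt_2_general Γ₁ ℓ hℓ α₁ β₁ β₂ h1 h2 hne
end

section
/- Let M = T₁ × ... × T_k be a direct product of non-abelian simple groups and let H ≤ M. If the projection of H to some factor Tᵢ is surjective (H is 'subdirect' in the factors it projects onto), then H contains a subgroup D which is a full diagonal subgroup of ∏_{i ∈ I} Tᵢ for some subset I containing i, i.e., D = {(tφᵢ)_{i∈I} : t ∈ T} for isomorphisms φᵢ : T → Tᵢ. (Scott's Lemma, special case: a subdirect subgroup of a finite direct product of non-abelian simple groups is a direct product of full diagonal subgroups corresponding to a partition of the index set.) -/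
/-- The subgroup of `H` consisting of elements supported on `S`. -/
def suppInter {k : ℕ} {T : Fin k → Type*} [∀ i, Group (T i)]
    (H : Subgroup (∀ i, T i)) (S : Finset (Fin k)) : Subgroup (∀ i, T i) where
  carrier := {h | h ∈ H ∧ ∀ j ∉ S, h j = 1}
  one_mem' := ⟨H.one_mem, fun _ _ => rfl⟩
  mul_mem' {a b} ha hb := ⟨H.mul_mem ha.1 hb.1, fun j hj => by
    simp [Pi.mul_apply, ha.2 j hj, hb.2 j hj]⟩
  inv_mem' {a} ha := ⟨H.inv_mem ha.1, fun j hj => by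
    simp [Pi.inv_apply, ha.2 j hj]⟩

lemma mem_suppInter {k : ℕ} {T : Fin k → Type*} [∀ i, Group (T i)]
    {H : Subgroup (∀ i, T i)} {S : Finset (Fin k)} {h : ∀ i, T i} :
    h ∈ suppInter H S ↔ h ∈ H ∧ ∀ j ∉ S, h j = 1 := Iff.rfl

lemma conj_mem_suppInter {k : ℕ} {T : Fin k → Type*} [∀ i, Group (T i)]
    {H : Subgroup (∀ i, T i)} {S : Finset (Fin k)} {g n : ∀ i, T i}
    (hg : g ∈ H) (hn : n ∈ suppInter H S) : g * n * g⁻¹ ∈ suppInter H S := by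
  refine ⟨H.mul_mem (H.mul_mem hg hn.1) (H.inv_mem hg), fun j hj => ?_⟩
  simp [Pi.mul_apply, Pi.inv_apply, hn.2 j hj]

/-- Scott's Lemma, special case: a subdirect subgroup `H` of a finite direct
product `T₁ × ⋯ × T_k` of non-abelian simple groups contains, for each index `i`, a full
diagonal subgroup of `∏_{j ∈ I} T_j` for some subset `I` containing `i`: there are
homomorphisms `φ_j : T_i → T_j` which are isomorphisms for `j ∈ I`, with `φ_i = id`, such that
every diagonal element `(t φ_j)_{j ∈ I}` (extended by `1` off `I`) lies in `H`. -/
theorem stmt_15 (k : ℕ) (T : Fin k → Type*) [∀ i, Group (T i)] [∀ i, Finite (T i)]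
    (hsimple : ∀ i, IsSimpleGroup (T i))
    (hnonab : ∀ i, ∃ a b : T i, a * b ≠ b * a)
    (H : Subgroup (∀ i, T i))
    (hsubdirect : ∀ (j : Fin k) (t : T j), ∃ h ∈ H, h j = t)
    (i : Fin k) :
    ∃ I : Finset (Fin k), i ∈ I ∧
      ∃ φ : ∀ j : Fin k, T i →* T j,
        (∀ j ∈ I, Function.Bijective (φ j)) ∧
        φ i = MonoidHom.id (T i) ∧
        ∀ t : T i, (fun j => if j ∈ I then φ j t else 1) ∈ H := by
  classical
  haveI := hsimple
  obtain ⟨a, b, hab⟩ := hnonab i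
  have ha1 : a ≠ 1 := fun h => hab (by simp [h])
  -- The property of a support set S: H ∩ (supported on S) surjects onto T i
  set P : Finset (Fin k) → Prop := fun S => ∀ t : T i, ∃ h ∈ suppInter H S, h i = t with hPdef
  have hPuniv : P Finset.univ := by
    intro t
    obtain ⟨h, hh, hhi⟩ := hsubdirect i t
    exact ⟨h, ⟨hh, fun j hj => absurd (Finset.mem_univ j) hj⟩, hhi⟩
  have hne : {n | ∃ S : Finset (Fin k), S.card = n ∧ P S}.Nonempty :=
    ⟨_, Finset.univ, rfl, hPuniv⟩
  obtain ⟨S, hScard, hPS⟩ := Nat.sInf_mem hne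
  have hmin : ∀ S' : Finset (Fin k), S'.card < S.card → ¬ P S' := by
    intro S' hlt hP'
    apply Nat.notMem_of_lt_sInf (hScard ▸ hlt)
    exact ⟨S', rfl, hP'⟩
  have hiS : i ∈ S := by
    by_contra hiS
    obtain ⟨h, hh, hhi⟩ := hPS a
    exact ha1 (by rw [← hhi]; exact hh.2 i hiS)
  -- Step A: the projection to coordinate i is injective on suppInter H S
  have hinj : ∀ h ∈ suppInter H S, h i = 1 → h = 1 := by
    intro h hh hhi
    by_contra hne1
    obtain ⟨j, hj⟩ : ∃ j, h j ≠ 1 := by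
      by_contra hc; push_neg at hc; exact hne1 (funext hc)
    have hjS : j ∈ S := by by_contra hjS; exact hj (hh.2 j hjS)
    have hji : j ≠ i := fun e => hj (by rw [e]; exact hhi)
    -- A1: the image at i of elements supported on S.erase j is trivial
    have hA1 : ∀ n ∈ suppInter H (S.erase j), n i = 1 := by
      set A : Subgroup (T i) := (suppInter H (S.erase j)).map (Pi.evalMonoidHom T i) with hA
      have hAnormal : A.Normal := by
        constructor
        rintro x ⟨n, hn, rfl⟩ g
        obtain ⟨gh, hgh, hghi⟩ := hPS g
        refine ⟨gh * n * gh⁻¹, conj_mem_suppInter hgh.1 hn, ?_⟩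
        simp [Pi.mul_apply, Pi.inv_apply, hghi]
      rcases hAnormal.eq_bot_or_eq_top with hbot | htop
      · intro n hn
        have : (n i) ∈ A := ⟨n, hn, rfl⟩
        rwa [hbot, Subgroup.mem_bot] at this
      · exfalso
        refine hmin (S.erase j) (Finset.card_erase_lt_of_mem hjS) ?_
        intro t
        have : t ∈ A := htop ▸ Subgroup.mem_top t
        obtain ⟨n, hn, hni⟩ := this
        exact ⟨n, hn, hni⟩
    -- A2: the image at j of elements supported on S.erase i is all of T j
    have hA2 : ∀ g : T j, ∃ n ∈ suppInter H (S.erase i), n j = g := by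
      set B : Subgroup (T j) := (suppInter H (S.erase i)).map (Pi.evalMonoidHom T j) with hB
      have hBnormal : B.Normal := by
        constructor
        rintro x ⟨n, hn, rfl⟩ g
        obtain ⟨gh, hgh, hghj⟩ := hsubdirect j g
        refine ⟨gh * n * gh⁻¹, conj_mem_suppInter hgh hn, ?_⟩
        simp [Pi.mul_apply, Pi.inv_apply, hghj]
      have hmem : h ∈ suppInter H (S.erase i) := by
        refine ⟨hh.1, fun l hl => ?_⟩
        rcases eq_or_ne l i with rfl | hne
        · exact hhi
        · exact hh.2 l (fun hlS => hl (Finset.mem_erase.2 ⟨hne, hlS⟩))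
      have hBne : B ≠ ⊥ := by
        intro hbot
        have : h j ∈ B := ⟨h, hmem, rfl⟩
        rw [hbot, Subgroup.mem_bot] at this
        exact hj this
      have hBtop : B = ⊤ := (hBnormal.eq_bot_or_eq_top).resolve_left hBne
      intro g
      have : g ∈ B := hBtop ▸ Subgroup.mem_top g
      obtain ⟨n, hn, hnj⟩ := this
      exact ⟨n, hn, hnj⟩
    -- derive the contradiction
    obtain ⟨g, hg, hgi⟩ := hPS a
    obtain ⟨n, hn, hnj⟩ := hA2 (g j)
    have hni : n i = 1 := hn.2 i (Finset.notMem_erase i S)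
    have hmmem : g * n⁻¹ ∈ suppInter H (S.erase j) := by
      refine ⟨H.mul_mem hg.1 (H.inv_mem hn.1), fun l hl => ?_⟩
      rcases eq_or_ne l j with rfl | hne
      · simp [Pi.mul_apply, Pi.inv_apply, hnj]
      · have hlS : l ∉ S := fun hlS => hl (Finset.mem_erase.2 ⟨hne, hlS⟩)
        have h1 : g l = 1 := hg.2 l hlS
        have h2 : n l = 1 := hn.2 l (fun h' => hlS (Finset.mem_of_mem_erase h'))
        simp [Pi.mul_apply, Pi.inv_apply, h1, h2]
    have := hA1 _ hmmem
    rw [Pi.mul_apply, Pi.inv_apply, hgi, hni] at this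
    simp at this
    exact ha1 this
  -- Build the isomorphism
  set HS := suppInter H S with hHS
  set f : HS →* T i := (Pi.evalMonoidHom T i).comp HS.subtype with hf
  have hfinj : Function.Injective f := by
    intro x y hxy
    have hmem : (↑(x * y⁻¹) : ∀ l, T l) ∈ HS := (x * y⁻¹).2
    have h1 : (↑(x * y⁻¹) : ∀ l, T l) i = 1 := by
      simp only [Subgroup.coe_mul, Subgroup.coe_inv, Pi.mul_apply, Pi.inv_apply]
      have : (x : ∀ l, T l) i = (y : ∀ l, T l) i := hxy
      rw [this]; simp
    have := hinj _ hmem h1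
    have hxy1 : x * y⁻¹ = 1 := Subtype.ext this
    exact mul_inv_eq_one.mp hxy1
  have hfsurj : Function.Surjective f := by
    intro t
    obtain ⟨h, hh, hhi⟩ := hPS t
    exact ⟨⟨h, hh⟩, hhi⟩
  set e : HS ≃* T i := MulEquiv.ofBijective f ⟨hfinj, hfsurj⟩ with he
  have hkey : ∀ t : T i, (↑(e.symm t) : ∀ l, T l) i = t := by
    intro t
    have := e.apply_symm_apply t
    exact this
  set φ : ∀ j : Fin k, T i →* T j :=
    fun j => (Pi.evalMonoidHom T j).comp (HS.subtype.comp e.symm.toMonoidHom) with hφ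
  have hφval : ∀ j t, φ j t = (↑(e.symm t) : ∀ l, T l) j := fun _ _ => rfl
  set I : Finset (Fin k) := S.filter (fun j => ∃ t, φ j t ≠ 1) with hI
  have hiI : i ∈ I := Finset.mem_filter.2 ⟨hiS, ⟨a, by rw [hφval]; rw [hkey]; exact ha1⟩⟩
  refine ⟨I, hiI, φ, ?_, ?_, ?_⟩
  · -- bijectivity on I
    intro j hj
    obtain ⟨hjS, t0, ht0⟩ := Finset.mem_filter.1 hj
    constructor
    · -- injective
      have : (φ j).ker = ⊥ ∨ (φ j).ker = ⊤ := ((φ j).normal_ker).eq_bot_or_eq_top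
      rcases this with hker | hker
      · exact (MonoidHom.ker_eq_bot_iff _).1 hker
      · exfalso
        exact ht0 (by rw [← MonoidHom.mem_ker, hker]; exact Subgroup.mem_top t0)
    · -- surjective
      have hrange : (φ j).range.Normal := by
        constructor
        rintro x ⟨t, rfl⟩ g
        obtain ⟨gh, hgh, hghj⟩ := hsubdirect j g
        have hconj : (gh * ↑(e.symm t) * gh⁻¹ : ∀ l, T l) ∈ HS :=
          conj_mem_suppInter hgh (e.symm t).2
        refine ⟨(gh * ↑(e.symm t) * gh⁻¹ : ∀ l, T l) i, ?_⟩
        have hsymm : e.symm ((gh * ↑(e.symm t) * gh⁻¹ : ∀ l, T l) i) =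
            ⟨gh * ↑(e.symm t) * gh⁻¹, hconj⟩ := by
          apply e.injective
          rw [e.apply_symm_apply]
          rfl
        rw [hφval, hsymm]
        simp [Pi.mul_apply, Pi.inv_apply, hghj, hφval]
      have hrne : (φ j).range ≠ ⊥ := by
        intro hbot
        have hmem : (φ j) t0 ∈ (⊥ : Subgroup (T j)) := hbot ▸ ⟨t0, rfl⟩
        exact ht0 (by simpa using hmem)
      have := hrange.eq_bot_or_eq_top.resolve_left hrne
      exact MonoidHom.range_eq_top.1 this
  · -- φ i = id
    ext t
    exact hkey t
  · -- diagonal elements lie in H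
    intro t
    have heq : (fun j => if j ∈ I then φ j t else 1) = (↑(e.symm t) : ∀ l, T l) := by
      funext j
      by_cases hjI : j ∈ I
      · simp [hjI, hφval]
      · simp only [hjI, if_false]
        by_cases hjS : j ∈ S
        · have : ¬ ∃ s, φ j s ≠ 1 := fun h' => hjI (Finset.mem_filter.2 ⟨hjS, h'⟩)
          push_neg at this
          exact (this t).symm
        · exact ((e.symm t).2.2 j hjS).symm
    rw [heq]
    exact (e.symm t).2.1
end
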